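/- Let n ≥ 1 be an integer and let A be meromorphic in a neighborhood of 0 with Laurent expansion A(z) = b₀/z² + b₁/z + b₂ + ⋯ where b₀ = (1-(n+1)²)/4. Suppose the Briot–Bouquet equation z ω'(z) = -(n+1) ω(z) + ω(z)² + A(z) z² - (1-(n+1)²)/4 has a holomorphic solution ω near 0 with ω(0) = 0 (which holds since -(n+1) is not a positive integer). Then v₁(z) = (-(n+2)/2 + ω(z))/z is a meromorphic solution near 0 of the Riccati equation v' - v² = A(z), with a simple pole at 0 of residue -(n+2)/2. -/

import Mathlib

/-!
With `v = (a + ω)/z` one has `z² (v' - v²) = z ω' - (1 + 2a) ω - ω² - a(1 + a)`, so `v` solves the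
Riccati equation `v' - v² = A` exactly where `ω` solves the Briot–Bouquet equation
`z ω' = (1 + 2a) ω + ω² + A z² + a(1 + a)`. For `a = -(n+2)/2` this is the stated equation, since
`1 + 2a = -(n+1)` and `a(1 + a) = ((n+1)² - 1)/4`. The residue is `a + ω(0) = a`.
-/

open Filter Topology

section

variable {𝕜 : Type*} [NontriviallyNormedField 𝕜]

theorem deriv_sub_sq_eq_of_briot_bouquet {ω A : 𝕜 → 𝕜} {a z : 𝕜} (hz : z ≠ 0)
    (hω : DifferentiableAt 𝕜 ω z)
    (hBB : z * deriv ω z = (1 + 2 * a) * ω z + ω z ^ 2 + A z * z ^ 2 + a * (1 + a)) :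
    deriv (fun w => (a + ω w) / w) z - ((a + ω z) / z) ^ 2 = A z := by
  rw [((hω.hasDerivAt.const_add a).fun_div (hasDerivAt_id' z) hz).deriv]
  field_simp
  linear_combination hBB

theorem tendsto_mul_div_self_nhdsNE {f : 𝕜 → 𝕜} (hf : ContinuousAt f 0) :
    Tendsto (fun z => z * (f z / z)) (𝓝[≠] 0) (𝓝 (f 0)) := by
  refine (hf.tendsto.mono_left nhdsWithin_le_nhds).congr' ?_
  filter_upwards [self_mem_nhdsWithin] with z (hz : z ≠ 0)
  rw [mul_div_cancel₀ _ hz]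

end

theorem briot_bouquet_gives_riccati_solution
    (n : ℕ) (U : Set ℂ) (hU : IsOpen U) (h0 : (0:ℂ) ∈ U)
    (A : ℂ → ℂ)
    (ω : ℂ → ℂ) (hω : DifferentiableOn ℂ ω U) (hω0 : ω 0 = 0)
    (hBB : ∀ z ∈ U, z ≠ 0 →
      z * deriv ω z = -((n : ℂ) + 1) * ω z + (ω z)^2 + A z * z^2
        - (1 - ((n : ℂ) + 1)^2) / 4)
    (v₁ : ℂ → ℂ) (hv₁ : ∀ z, v₁ z = (-(((n : ℂ) + 2) / 2) + ω z) / z) :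
    (∀ z ∈ U, z ≠ 0 → deriv v₁ z - (v₁ z)^2 = A z) ∧
    Filter.Tendsto (fun z => z * v₁ z) (nhdsWithin 0 {(0:ℂ)}ᶜ)
      (nhds (-(((n : ℂ) + 2) / 2))) := by
  obtain rfl : v₁ = fun z => (-(((n : ℂ) + 2) / 2) + ω z) / z := funext hv₁
  constructor
  · intro z hz hz0
    exact deriv_sub_sq_eq_of_briot_bouquet hz0 (hω.differentiableAt (hU.mem_nhds hz))
      (by linear_combination hBB z hz hz0)
  · have hωc : ContinuousAt ω 0 := (hω.differentiableAt (hU.mem_nhds h0)).continuousAt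
    simpa [hω0] using tendsto_mul_div_self_nhdsNE (continuousAt_const.add hωc)
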